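/- arXiv:1612.04354 — 3 statements merged into one kernel-verified Lean document; each statement's English description precedes it below -/
import Mathlib

section
/- Conversely, for the multinomial sampling scheme: if there exists a vector-valued family (b_i)_{i=1}^r in R^r such that for all compositions x = (x_1,...,x_r) of nonnegative reals with T = Σ x_i > 0 one has Σ_{k∈Δ} a_k · C(m;k) · x^k / T^m = (1/T) Σ_{i=1}^r x_i b_i, then necessarily b_i = a_{m·e_i} and a_k = Σ_{i=1}^r (k_i/m) a_{m·e_i} for all k ∈ Δ. -/
/-!
Fix a coordinate `j`. Clearing the denominator `(∑ i, x i) ^ m` turns the hypothesis into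
`∑ k, a k j * C(m;k) * x ^ k = (∑ i, x i) ^ (m - 1) * ∑ i, x i * b i j` on the positive orthant,
hence into an identity of polynomials. Since `X i * ∂ᵢ (∑ X) ^ m = m * X i * (∑ X) ^ (m - 1)` and
`X i * ∂ᵢ` multiplies the coefficient of `X ^ k` by `k i`, comparing coefficients of `X ^ k` gives
`m * a k j = ∑ i, k i * b i j`. At `k = m • eᵢ` this reads `b i = a (m • eᵢ)`.
-/

open MvPolynomial Finset

namespace MvPolynomial

variable {σ R : Type*} [CommSemiring R]

theorem coeff_X_mul_pderiv (i : σ) (p : MvPolynomial σ R) (d : σ →₀ ℕ) :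
    coeff d (X i * pderiv i p) = d i * coeff d p := by
  classical
  induction p using MvPolynomial.induction_on' with
  | add p q hp hq => simp only [map_add, mul_add, coeff_add, hp, hq]
  | monomial n a =>
    rw [X_mul_pderiv_monomial, coeff_smul, coeff_monomial]
    split_ifs with h <;> simp [h, nsmul_eq_mul]

variable [Fintype σ]

theorem coeff_sum_C_mul_prod_X_pow (s : Finset (σ → ℕ)) (c : (σ → ℕ) → R) {d : σ →₀ ℕ}
    (hd : ⇑d ∈ s) : coeff d (∑ l ∈ s, C (c l) * ∏ i, X i ^ l i) = c d := by
  classical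
  simp only [coeff_sum, coeff_C_mul, coeff_prod_X_pow, mul_ite, mul_one, mul_zero]
  have hind : ∀ l : σ → ℕ, (d = Finsupp.indicator univ fun i _ => l i) ↔ ⇑d = l := fun l => by
    simp [DFunLike.ext_iff, _root_.funext_iff]
  simp only [hind]
  rw [sum_ite_eq, if_pos hd]

theorem coeff_X_mul_pderiv_sum_X_pow (i : σ) {n : ℕ} {d : σ →₀ ℕ} (hd : ∑ j, d j = n) :
    coeff d (X i * pderiv i ((∑ j, X j : MvPolynomial σ R) ^ n))
      = (d i * Nat.multinomial univ d : R) := by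
  rw [coeff_X_mul_pderiv, coeff_sum_X_pow_of_fintype, Finsupp.sum_fintype _ _ fun _ => rfl,
    if_pos hd, Finsupp.multinomial_eq_of_support_subset (subset_univ _)]

end MvPolynomial

theorem sum_multinomial_mul_prod_pow_eq_of_sum_div_eq {r m : ℕ} (hm : 0 < m)
    (c : (Fin r → ℕ) → ℝ) (β : Fin r → ℝ) {x : Fin r → ℝ} (hx : ∑ i, x i ≠ 0)
    (h : ∑ k ∈ Nat.antidiagonalTuple r m,
        c k * ((Nat.multinomial univ k : ℝ) * (∏ i, x i ^ k i) / (∑ i, x i) ^ m)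
      = (1 / ∑ i, x i) * ∑ i, x i * β i) :
    ∑ k ∈ Nat.antidiagonalTuple r m, c k * Nat.multinomial univ k * ∏ i, x i ^ k i
      = (∑ i, x i) ^ (m - 1) * ∑ i, x i * β i := by
  calc ∑ k ∈ Nat.antidiagonalTuple r m, c k * Nat.multinomial univ k * ∏ i, x i ^ k i
      = (∑ i, x i) ^ m * ∑ k ∈ Nat.antidiagonalTuple r m,
          c k * ((Nat.multinomial univ k : ℝ) * (∏ i, x i ^ k i) / (∑ i, x i) ^ m) := by
        rw [mul_sum]
        exact sum_congr rfl fun k _ => by field_simp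
    _ = (∑ i, x i) ^ m * ((1 / ∑ i, x i) * ∑ i, x i * β i) := by rw [h]
    _ = (∑ i, x i) ^ (m - 1) * ∑ i, x i * β i := by
        conv_lhs => rw [← Nat.sub_add_cancel hm, pow_succ]
        field_simp

theorem eq_sum_mul_of_sum_multinomial_mul_prod_pow_eq {r m : ℕ} (hm : 0 < m)
    (c : (Fin r → ℕ) → ℝ) (β : Fin r → ℝ)
    (h : ∀ x : Fin r → ℝ, (∀ i, 0 < x i) →
      ∑ k ∈ Nat.antidiagonalTuple r m, c k * Nat.multinomial univ k * ∏ i, x i ^ k i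
        = (∑ i, x i) ^ (m - 1) * ∑ i, x i * β i) :
    ∀ k ∈ Nat.antidiagonalTuple r m, c k = ∑ i, k i / m * β i := by
  have hpderiv : ∀ i, pderiv i ((∑ i, X i : MvPolynomial (Fin r) ℝ) ^ m)
      = (m : MvPolynomial (Fin r) ℝ) * (∑ i, X i) ^ (m - 1) := fun i => by simp
  have hpoly : m • ∑ k ∈ Nat.antidiagonalTuple r m,
        C (c k * Nat.multinomial univ k) * ∏ i, X i ^ k i
      = ∑ i, C (β i) * (X i * pderiv i ((∑ i, X i : MvPolynomial (Fin r) ℝ) ^ m)) := by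
    refine funext_set (fun _ => Set.Ioi 0) (fun _ => Set.Ioi_infinite 0) fun x hx => ?_
    simp only [hpderiv, map_mul, map_sum, eval_C, eval_X, map_prod, map_pow,
      map_natCast, nsmul_eq_mul]
    rw [h x (by simpa using hx), mul_sum, mul_sum]
    exact sum_congr rfl fun i _ => by ring
  intro k hk
  have hcoeff : m * c k * Nat.multinomial univ k = (∑ i, k i * β i) * Nat.multinomial univ k := by
    have := congrArg (coeff (Finsupp.equivFunOnFinite.symm k)) hpoly
    rw [coeff_smul, coeff_sum_C_mul_prod_X_pow _ _ hk, coeff_sum] at this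
    simp only [coeff_C_mul, Finsupp.coe_equivFunOnFinite_symm, nsmul_eq_mul,
      coeff_X_mul_pderiv_sum_X_pow (d := Finsupp.equivFunOnFinite.symm k) _
        (Nat.mem_antidiagonalTuple.mp hk)] at this
    rw [sum_mul, mul_assoc, this]
    exact sum_congr rfl fun i _ => by ring
  have hm' : (m : ℝ) ≠ 0 := by positivity
  have hmult : (Nat.multinomial univ k : ℝ) ≠ 0 :=
    Nat.cast_ne_zero.mpr (Nat.multinomial_pos _ _).ne'
  simp_rw [div_mul_eq_mul_div, ← sum_div]
  rw [eq_div_iff hm', mul_comm]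
  exact mul_right_cancel₀ hmult hcoeff

/-- Necessity of the linearity condition under multinomial sampling (model R). -/
theorem stmt6 (r m : ℕ) (hr : 0 < r) (hm : 0 < m)
    (a : (Fin r → ℕ) → Fin r → ℝ) (b : Fin r → Fin r → ℝ)
    (h : ∀ x : Fin r → ℝ, (∀ i, 0 ≤ x i) → 0 < ∑ i, x i → ∀ j,
      ∑ k ∈ Finset.Nat.antidiagonalTuple r m,
        a k j * ((Nat.multinomial Finset.univ k : ℝ) * (∏ i, x i ^ k i) / (∑ i, x i) ^ m)
        = (1 / ∑ i, x i) * ∑ i, x i * b i j) :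
    (∀ i, b i = a (Pi.single i m)) ∧
      ∀ k ∈ Finset.Nat.antidiagonalTuple r m, ∀ j,
        a k j = ∑ i, (k i : ℝ) / m * a (Pi.single i m) j := by
  have hlin : ∀ k ∈ Nat.antidiagonalTuple r m, ∀ j, a k j = ∑ i, (k i : ℝ) / m * b i j := by
    intro k hk j
    refine eq_sum_mul_of_sum_multinomial_mul_prod_pow_eq hm (a · j) (b · j) (fun x hx => ?_) k hk
    have hT : 0 < ∑ i, x i := sum_pos (fun i _ => hx i) ⟨⟨0, hr⟩, mem_univ _⟩
    exact sum_multinomial_mul_prod_pow_eq_of_sum_div_eq hm _ _ hT.ne'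
      (h x (fun i => (hx i).le) hT j)
  have hb : ∀ i, b i = a (Pi.single i m) := fun i => funext fun j => by
    rw [hlin _ (by simp [Nat.mem_antidiagonalTuple]) j]
    simp [Pi.single_apply, ite_div, ite_mul, hm.ne']
  refine ⟨hb, fun k hk j => ?_⟩
  simp only [hlin k hk j, hb]
end

section
/- Suppose the ordered-sample replacement vectors (a_d)_{d∈S} satisfy, for every k ∈ Δ, Σ_{d : j(d)=k} a_d = Σ_{i=1}^r C(m-1; k - e_i) · a_{i·1} (where i·1 = (i,i,...,i) is the constant sequence and terms with k_i = 0 are omitted). Then for ordered sampling with replacement (model R_SEQ), with weights x = (x_1,...,x_r), T = Σ x_i > 0: Σ_{d∈S} a_d · x^{j(d)} / T^m = (1/T) Σ_{i=1}^r x_i · a_{i·1}. -/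
/-!
Group the sequences `d` by their multiplicity vector `k = j(d)`. The linearity condition
replaces the total weight of each class by `∑ i, C(m-1; k - e_i) a_{i·1}`, and for fixed `i`
the shift `k ↦ k - e_i` turns `∑ₖ C(m-1; k - e_i) x^k` into `x_i · T^(m-1)` by the multinomial
theorem. Hence `∑_d a_d x^{j(d)} = T^(m-1) ∑ᵢ x_i a_{i·1}`.
-/

open Finset Function

variable {ι : Type*} [Fintype ι] [DecidableEq ι]

lemma sum_piAntidiag_succ_filter_one_le {M : Type*} [AddCommMonoid M] (g : (ι → ℕ) → M)
    (i : ι) (n : ℕ) :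
    ∑ k ∈ piAntidiag univ (n + 1) with 1 ≤ k i, g k
      = ∑ k ∈ piAntidiag univ n, g (update k i (k i + 1)) := by
  have hsum (k : ι → ℕ) (b : ℕ) : univ.sum (update k i b) + k i = univ.sum k + b := by
    rw [sum_update_of_mem (mem_univ i), ← add_sum_erase univ k (mem_univ i),
      sdiff_singleton_eq_erase]
    ring
  refine sum_nbij' (fun k ↦ update k i (k i - 1)) (fun k ↦ update k i (k i + 1)) ?_ ?_ ?_ ?_ ?_
    <;> intro k hk
    <;> simp only [mem_filter, mem_piAntidiag, mem_univ, implies_true, and_true] at hk ⊢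
  · have := hsum k (k i - 1)
    omega
  · have := hsum k (k i + 1)
    simp only [update_self, le_add_iff_nonneg_left, zero_le, and_true]
    omega
  · simp [Nat.sub_add_cancel hk.2]
  · simp
  · simp [Nat.sub_add_cancel hk.2]

lemma prod_pow_update_succ {R : Type*} [CommMonoid R] (x : ι → R) (k : ι → ℕ) (i : ι) :
    ∏ ℓ, x ℓ ^ update k i (k i + 1) ℓ = x i * ∏ ℓ, x ℓ ^ k ℓ := by
  simp_rw [apply_update (fun ℓ e ↦ x ℓ ^ e)]
  rw [prod_update_of_mem (mem_univ i), pow_succ, ← mul_prod_erase univ _ (mem_univ i),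
    sdiff_singleton_eq_erase, mul_comm (x i ^ k i), mul_assoc]

lemma sum_piAntidiag_succ_multinomial_pred_mul_prod_pow {R : Type*} [CommSemiring R]
    (x : ι → R) (i : ι) (n : ℕ) :
    ∑ k ∈ piAntidiag univ (n + 1),
        (if 1 ≤ k i then (Nat.multinomial univ (update k i (k i - 1)) : R) else 0)
          * ∏ ℓ, x ℓ ^ k ℓ
      = x i * (∑ ℓ, x ℓ) ^ n := by
  simp_rw [ite_mul, zero_mul]
  rw [← sum_filter, sum_piAntidiag_succ_filter_one_le, sum_pow_eq_sum_piAntidiag, mul_sum]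
  refine sum_congr rfl fun k _ ↦ ?_
  simp only [update_self, add_tsub_cancel_right, update_idem, update_eq_self,
    prod_pow_update_succ]
  ring

lemma sum_mul_prod_pow_card_fiber {R : Type*} [CommSemiring R] {α : Type*} [Fintype α]
    [DecidableEq α] (b : (α → ι) → R) (x : ι → R) :
    ∑ d : α → ι, b d * ∏ ℓ, x ℓ ^ #{a | d a = ℓ}
      = ∑ k ∈ piAntidiag univ (Fintype.card α),
          (∑ d with ∀ ℓ, #{a | d a = ℓ} = k ℓ, b d) * ∏ ℓ, x ℓ ^ k ℓ := by
  have hmaps (d : α → ι) : (fun ℓ ↦ #{a | d a = ℓ}) ∈ piAntidiag univ (Fintype.card α) := by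
    simp only [mem_piAntidiag, mem_univ, implies_true, and_true]
    exact (card_eq_sum_card_fiberwise fun a _ ↦ mem_univ (d a)).symm
  rw [← sum_fiberwise_of_maps_to (g := fun d ℓ ↦ #{a | d a = ℓ}) fun d _ ↦ hmaps d]
  refine sum_congr rfl fun k _ ↦ ?_
  simp only [funext_iff, sum_mul]
  exact sum_congr rfl fun d hd ↦ by simp only [(mem_filter.1 hd).2]

theorem stmt16_general (r m : ℕ) (hm : 1 ≤ m)
    (a : (Fin m → Fin r) → Fin r → ℝ)
    (hlin : ∀ k ∈ Finset.Nat.antidiagonalTuple r m, ∀ j,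
      ∑ d ∈ Finset.univ.filter (fun d : Fin m → Fin r =>
          ∀ ℓ, (Finset.univ.filter fun i => d i = ℓ).card = k ℓ), a d j
        = ∑ i, (if 1 ≤ k i then
            (Nat.multinomial Finset.univ (Function.update k i (k i - 1)) : ℝ)
          else 0) * a (fun _ => i) j)
    (x : Fin r → ℝ) (T : ℝ) (hT : T = ∑ i, x i)
    (hTpos : 0 < T) (j : Fin r) :
    ∑ d : Fin m → Fin r,
      a d j * ((∏ ℓ, x ℓ ^ (Finset.univ.filter fun i => d i = ℓ).card) / T ^ m)
      = (1 / T) * ∑ i, x i * a (fun _ => i) j := by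
  obtain ⟨n, rfl⟩ : ∃ n, m = n + 1 := ⟨m - 1, by omega⟩
  have key : ∑ d : Fin (n + 1) → Fin r, a d j * ∏ ℓ, x ℓ ^ #{i | d i = ℓ}
      = (∑ i, x i * a (fun _ ↦ i) j) * T ^ n := by
    rw [sum_mul_prod_pow_card_fiber, Fintype.card_fin]
    calc _ = ∑ k ∈ piAntidiag univ (n + 1), ∑ i,
            (if 1 ≤ k i then (Nat.multinomial univ (update k i (k i - 1)) : ℝ) else 0)
              * a (fun _ ↦ i) j * ∏ ℓ, x ℓ ^ k ℓ := by
          refine sum_congr rfl fun k hk ↦ ?_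
          rw [piAntidiag_univ_fin_eq_antidiagonalTuple] at hk
          rw [← sum_mul, ← hlin k hk j]
          -- the two filters differ only in their `Decidable` instances
          congr
      _ = ∑ i, a (fun _ ↦ i) j * (x i * T ^ n) := by
          rw [sum_comm]
          refine sum_congr rfl fun i _ ↦ ?_
          rw [hT, ← sum_piAntidiag_succ_multinomial_pred_mul_prod_pow, mul_sum]
          exact sum_congr rfl fun k _ ↦ by ring
      _ = _ := by rw [sum_mul]; exact sum_congr rfl fun i _ ↦ by ring
  simp_rw [mul_div_assoc', ← sum_div, key]
  field_simp
  ring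

/-- Sufficiency of the linearity condition for ordered samples with replacement
(model R_SEQ). -/
theorem stmt16 (r m : ℕ) (hm : 1 ≤ m)
    (a : (Fin m → Fin r) → Fin r → ℝ)
    (hlin : ∀ k ∈ Finset.Nat.antidiagonalTuple r m, ∀ j,
      ∑ d ∈ Finset.univ.filter (fun d : Fin m → Fin r =>
          ∀ ℓ, (Finset.univ.filter fun i => d i = ℓ).card = k ℓ), a d j
        = ∑ i, (if 1 ≤ k i then
            (Nat.multinomial Finset.univ (Function.update k i (k i - 1)) : ℝ)
          else 0) * a (fun _ => i) j)
    (x : Fin r → ℝ) (hx : ∀ i, 0 ≤ x i) (T : ℝ) (hT : T = ∑ i, x i)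
    (hTpos : 0 < T) (j : Fin r) :
    ∑ d : Fin m → Fin r,
      a d j * ((∏ ℓ, x ℓ ^ (Finset.univ.filter fun i => d i = ℓ).card) / T ^ m)
      = (1 / T) * ∑ i, x i * a (fun _ => i) j :=
  stmt16_general r m hm a hlin x T hT hTpos j
end

section
/- Under the same condition Σ_{d : j(d)=k} a_d = Σ_{i=1}^r C(m-1; k-e_i)·a_{i·1} for all k ∈ Δ, for ordered sampling without replacement (model M_SEQ) with x_i ≥ 0 integers and T = Σ x_i ≥ m: Σ_{d∈S} a_d · (x_1)_{j_1(d)}⋯(x_r)_{j_r(d)} / (T)_m = (1/T) Σ_{i=1}^r x_i · a_{i·1}. -/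
/-!
Group the samples `d` by their count vector `k`. The weight `∏ ℓ, (x ℓ)_(k ℓ)` depends only on
`k`, so the linearity condition turns the sum into
`∑ i, a (i·1) * ∑ k, C(m-1; k - e_i) * ∏ ℓ, (x ℓ)_(k ℓ)`. Writing `k = k' + e_i` and pulling the
factor `x i` out of `(x i)_(k' i + 1)`, the inner sum is `x i` times
`∑ k', C(m-1; k') * ∏ ℓ, ((x - e_i) ℓ)_(k' ℓ) = (T - 1)_(m-1)`, by the multinomial Vandermonde
identity for falling factorials. Finally `(T)_m = T * (T - 1)_(m-1)`.
-/

open Finset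

namespace Nat

variable {ι : Type*} [DecidableEq ι]

theorem sum_piAntidiag_prod_choose (s : Finset ι) (x : ι → ℕ) (n : ℕ) :
    ∑ k ∈ piAntidiag s n, ∏ i ∈ s, (x i).choose (k i) = (∑ i ∈ s, x i).choose n := by
  induction s using Finset.cons_induction generalizing n with
  | empty => cases n <;> simp
  | cons a s has ih =>
    rw [piAntidiag_cons, sum_disjiUnion, sum_cons, add_choose_eq]
    refine sum_congr rfl fun p _ => ?_
    rw [← ih, mul_sum, sum_map]
    refine sum_congr rfl fun k hk => ?_
    have hka : k a = 0 := by
      by_contra h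
      exact has ((mem_piAntidiag.mp hk).2 a h)
    rw [prod_cons]
    simp only [addRightEmbedding_apply, Pi.add_apply, hka, if_pos, zero_add]
    congr 1
    refine prod_congr rfl fun i hi => ?_
    rw [if_neg (ne_of_mem_of_not_mem hi has), add_zero]


theorem sum_piAntidiag_multinomial_mul_prod_descFactorial (s : Finset ι) (x : ι → ℕ) (n : ℕ) :
    ∑ k ∈ piAntidiag s n, multinomial s k * ∏ i ∈ s, (x i).descFactorial (k i)
      = (∑ i ∈ s, x i).descFactorial n := by
  rw [descFactorial_eq_factorial_mul_choose, ← sum_piAntidiag_prod_choose, mul_sum]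
  refine sum_congr rfl fun k hk => ?_
  simp only [descFactorial_eq_factorial_mul_choose, prod_mul_distrib]
  rw [← (mem_piAntidiag.mp hk).1, ← multinomial_spec]
  ring

theorem descFactorial_succ_eq_mul_pred_descFactorial (x k : ℕ) :
    x.descFactorial (k + 1) = x * (x - 1).descFactorial k := by
  cases x with
  | zero => simp
  | succ x => rw [succ_descFactorial_succ, add_tsub_cancel_right]

variable [Fintype ι]

theorem prod_descFactorial_add_single (x k : ι → ℕ) (i : ι) :
    ∏ ℓ, (x ℓ).descFactorial ((k + Pi.single i 1 : ι → ℕ) ℓ)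
      = x i * ∏ ℓ, ((x - Pi.single i 1 : ι → ℕ) ℓ).descFactorial (k ℓ) := by
  rw [Fintype.prod_eq_mul_prod_compl i, Fintype.prod_eq_mul_prod_compl i, ← mul_assoc]
  congr 1
  · simp only [Pi.add_apply, Pi.sub_apply, Pi.single_eq_same]
    exact descFactorial_succ_eq_mul_pred_descFactorial _ _
  · refine prod_congr rfl fun ℓ hℓ => ?_
    simp [Pi.single_eq_of_ne (mem_compl.mp hℓ ∘ mem_singleton.mpr)]

theorem sum_piAntidiag_multinomial_update_pred_mul_prod_descFactorial
    (x : ι → ℕ) (i : ι) (n : ℕ) :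
    ∑ k ∈ piAntidiag univ (n + 1),
        (if 1 ≤ k i then multinomial univ (Function.update k i (k i - 1)) else 0)
          * ∏ ℓ, (x ℓ).descFactorial (k ℓ)
      = x i * (∑ ℓ, x ℓ - 1).descFactorial n := by
  have sub_add_single {k : ι → ℕ} (hk : 1 ≤ k i) : k - Pi.single i 1 + Pi.single i 1 = k := by
    ext ℓ
    rcases eq_or_ne ℓ i with rfl | hℓ
    · simpa using Nat.sub_add_cancel hk
    · simp [hℓ]
  have hshift : ∑ k ∈ piAntidiag univ (n + 1),
        (if 1 ≤ k i then multinomial univ (Function.update k i (k i - 1)) else 0)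
          * ∏ ℓ, (x ℓ).descFactorial (k ℓ)
      = ∑ k ∈ piAntidiag univ n,
          multinomial univ k * ∏ ℓ, (x ℓ).descFactorial ((k + Pi.single i 1 : ι → ℕ) ℓ) := by
    simp only [ite_mul, zero_mul]
    rw [← sum_filter]
    refine sum_nbij' (fun k => k - Pi.single i 1) (fun k => k + Pi.single i 1) ?_ ?_ ?_ ?_ ?_
    · intro k hk
      obtain ⟨hsum, hki⟩ := mem_filter.mp hk
      rw [← sub_add_single hki] at hsum
      simpa [sum_add_distrib] using hsum
    · intro k hk
      simpa [sum_add_distrib] using hk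
    · intro k hk
      exact sub_add_single (mem_filter.mp hk).2
    · intro k _
      exact add_tsub_cancel_right k _
    · intro k hk
      have hki := (mem_filter.mp hk).2
      rw [sub_add_single hki]
      congr 2
      ext ℓ
      rcases eq_or_ne ℓ i with rfl | hℓ
      · simp
      · simp [hℓ]
  rw [hshift]
  simp_rw [prod_descFactorial_add_single, mul_left_comm _ (x i), ← mul_sum,
    sum_piAntidiag_multinomial_mul_prod_descFactorial]
  rcases Nat.eq_zero_or_pos (x i) with hxi | hxi
  · simp [hxi]
  · have hsum := congrArg (fun y : ι → ℕ => ∑ ℓ, y ℓ) (sub_add_single hxi)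
    simp only [Pi.add_apply, sum_add_distrib, sum_pi_single', mem_univ, if_true] at hsum
    rw [← hsum, Nat.add_sub_cancel]

end Nat

theorem Fintype.sum_eq_sum_piAntidiag_sum_card_fiber {α ι M : Type*} [Fintype α] [DecidableEq α]
    [Fintype ι] [DecidableEq ι] [AddCommMonoid M] (f : (α → ι) → M) :
    ∑ d, f d = ∑ k ∈ piAntidiag univ (Fintype.card α),
      ∑ d with (fun ℓ => #{a | d a = ℓ}) = k, f d := by
  have hmaps : ∀ d ∈ (univ : Finset (α → ι)),
      (fun ℓ => #{a | d a = ℓ}) ∈ piAntidiag univ (Fintype.card α) := by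
    intro d _
    simp [← card_eq_sum_card_fiberwise (fun a _ => mem_univ (d a))]
  exact (sum_fiberwise_of_maps_to hmaps f).symm

/-- Sufficiency of the linearity condition for ordered samples without replacement
(model M_SEQ). -/
theorem stmt17 (r m : ℕ) (hm : 1 ≤ m)
    (a : (Fin m → Fin r) → Fin r → ℝ)
    (hlin : ∀ k ∈ Finset.Nat.antidiagonalTuple r m, ∀ j,
      ∑ d ∈ Finset.univ.filter (fun d : Fin m → Fin r =>
          ∀ ℓ, (Finset.univ.filter fun i => d i = ℓ).card = k ℓ), a d j
        = ∑ i, (if 1 ≤ k i then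
            (Nat.multinomial Finset.univ (Function.update k i (k i - 1)) : ℝ)
          else 0) * a (fun _ => i) j)
    (x : Fin r → ℕ) (T : ℕ) (hT : T = ∑ i, x i) (hTm : m ≤ T) (j : Fin r) :
    ∑ d : Fin m → Fin r,
      a d j * ((∏ ℓ, ((x ℓ).descFactorial
          ((Finset.univ.filter fun i => d i = ℓ).card) : ℝ)) /
        (T.descFactorial m : ℝ))
      = (1 / (T : ℝ)) * ∑ i, (x i : ℝ) * a (fun _ => i) j := by
  obtain ⟨n, rfl⟩ : ∃ n, m = n + 1 := ⟨m - 1, by omega⟩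
  obtain ⟨t, rfl⟩ : ∃ t, T = t + 1 := ⟨T - 1, by omega⟩
  set P : (Fin r → ℕ) → ℝ := fun k => ∏ ℓ, ((x ℓ).descFactorial (k ℓ) : ℝ)
  set C : (Fin r → ℕ) → Fin r → ℝ := fun k i =>
    if 1 ≤ k i then (Nat.multinomial univ (Function.update k i (k i - 1)) : ℝ) else 0
  have hC (i : Fin r) : ∑ k ∈ Nat.antidiagonalTuple r (n + 1), C k i * P k
      = x i * (t.descFactorial n : ℝ) := by
    have := Nat.sum_piAntidiag_multinomial_update_pred_mul_prod_descFactorial x i n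
    rw [← hT, Nat.add_sub_cancel, piAntidiag_univ_fin_eq_antidiagonalTuple] at this
    simp only [C, P]
    exact_mod_cast this
  have htn : (t.descFactorial n : ℝ) ≠ 0 := by
    exact_mod_cast (Nat.descFactorial_pos.mpr (by omega)).ne'
  calc _ = (∑ k ∈ Nat.antidiagonalTuple r (n + 1), P k *
          ∑ d with ∀ ℓ, #{i | d i = ℓ} = k ℓ, a d j) / ((t + 1).descFactorial (n + 1)) := by
        rw [Fintype.sum_eq_sum_piAntidiag_sum_card_fiber, Fintype.card_fin,
          piAntidiag_univ_fin_eq_antidiagonalTuple, sum_div]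
        refine sum_congr rfl fun k _ => ?_
        rw [filter_congr fun d _ => funext_iff, mul_sum, sum_div]
        refine sum_congr rfl fun d hd => ?_
        simp only [P, (mem_filter.mp hd).2]
        ring
    _ = (∑ i, (∑ k ∈ Nat.antidiagonalTuple r (n + 1), C k i * P k) * a (fun _ => i) j) /
          ((t + 1).descFactorial (n + 1)) := by
        rw [sum_congr rfl fun k hk => by rw [hlin k hk j]]
        simp only [mul_sum, sum_mul]
        rw [sum_comm]
        congr 1
        refine sum_congr rfl fun i _ => sum_congr rfl fun k _ => ?_
        ring
    _ = _ := by
        simp only [hC, Nat.succ_descFactorial_succ]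
        push_cast
        rw [mul_sum, sum_div]
        refine sum_congr rfl fun i _ => ?_
        field_simp
end
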